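/- arXiv:1911.00074 — 2 statements merged into one kernel-verified Lean document; each statement's English description precedes it below -/
import Mathlib

section
/- Let E → F → A → E[1] (with second map g : F → A) and F → G → B → F[1] (with third map f : B → F[1]) be distinguished triangles in 𝒯, where the first map of the second triangle is the second map composed appropriately, i.e. the object F is common to both triangles. (a) If the composite g[1] ∘ f : B → A[1] is the zero morphism, then there exist an object F'' of 𝒯 and morphisms such that E → F'' → B → E[1] and F'' → G → A → F''[1] are distinguished triangles. (b) If g[1] ∘ f : B → A[1] is an isomorphism, then the composite E → F → G of the first maps of the two given triangles is an isomorphism. -/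
open CategoryTheory Limits Pretriangulated

universe v u

namespace NC

section

variable {T : Type u} [Category.{v} T] [Preadditive T] [HasZeroObject T] [HasShift T ℤ]
  [∀ n : ℤ, (shiftFunctor T n).Additive] [Pretriangulated T]
  {E F G A B : T} {e : E ⟶ F} {g : F ⟶ A} {d : A ⟶ E⟦(1 : ℤ)⟧}
  {u : F ⟶ G} {w : G ⟶ B} {f : B ⟶ F⟦(1 : ℤ)⟧}

lemma exists_comp_neg_shift_map_eq_of_comp_shift_map_eq_zero
    (h₁ : Triangle.mk e g d ∈ distTriang T) {X : T} (x : X ⟶ F⟦(1 : ℤ)⟧)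
    (hx : x ≫ g⟦(1 : ℤ)⟧' = 0) : ∃ q : X ⟶ E⟦(1 : ℤ)⟧, q ≫ (-e⟦(1 : ℤ)⟧') = x := by
  obtain ⟨q, hq⟩ := Triangle.coyoneda_exact₃ _ (rot_of_distTriang _ (rot_of_distTriang _ h₁)) x
    (show x ≫ (-g⟦(1 : ℤ)⟧') = 0 by rw [Preadditive.comp_neg, hx, neg_zero])
  exact ⟨q, hq.symm⟩

/- Factor `f = q ≫ (-e⟦1⟧')` and let `F''` be the cocone of `q`: the rotations of the triangles
on `E → F''`, `E → F` and `F → G` form an octahedron over this factorisation, whose fourth face is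
`F'' → G → A`. -/
lemma exists_distinguished_triangles_of_comp_shift_map_eq_zero [IsTriangulated T]
    (h₁ : Triangle.mk e g d ∈ distTriang T) (h₂ : Triangle.mk u w f ∈ distTriang T)
    (hf : f ≫ g⟦(1 : ℤ)⟧' = 0) :
    ∃ (F'' : T) (e' : E ⟶ F'') (p : F'' ⟶ B) (q : B ⟶ E⟦(1 : ℤ)⟧)
      (r : F'' ⟶ G) (s : G ⟶ A) (t : A ⟶ F''⟦(1 : ℤ)⟧),
      Triangle.mk e' p q ∈ distTriang T ∧ Triangle.mk r s t ∈ distTriang T := by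
  obtain ⟨q, hq⟩ := exists_comp_neg_shift_map_eq_of_comp_shift_map_eq_zero h₁ f hf
  obtain ⟨F'', e', p, hF''⟩ := distinguished_cocone_triangle₂ q
  have hF''rot : Triangle.mk p q (-e'⟦(1 : ℤ)⟧') ∈ distTriang T := rot_of_distTriang _ hF''
  have h₁rot : Triangle.mk d (-e⟦(1 : ℤ)⟧') (-g⟦(1 : ℤ)⟧') ∈ distTriang T :=
    rot_of_distTriang _ (rot_of_distTriang _ h₁)
  have h₂rot : Triangle.mk w f (-u⟦(1 : ℤ)⟧') ∈ distTriang T := rot_of_distTriang _ h₂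
  let oct := Triangulated.someOctahedron' hq hF''rot h₁rot h₂rot
  exact ⟨F'', e', p, q, oct.m₁, oct.m₃, _, hF'', oct.mem⟩

/- The octahedron over `e ≫ u` gives a triangle `A → C → B → A⟦1⟧` with third map `f ≫ g⟦1⟧'`,
where `C` is the cone of `e ≫ u`; if that map is an isomorphism then `C` is zero. -/
lemma isIso_comp_of_isIso_comp_shift_map [IsTriangulated T]
    (h₁ : Triangle.mk e g d ∈ distTriang T) (h₂ : Triangle.mk u w f ∈ distTriang T)
    (hf : IsIso (f ≫ g⟦(1 : ℤ)⟧')) : IsIso (e ≫ u) := by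
  obtain ⟨C, v, w', hC⟩ := distinguished_cocone_triangle (e ≫ u)
  have hCzero : IsZero C :=
    Triangle.isZero₂_of_isIso₃ _ (Triangulated.someOctahedron rfl h₁ h₂ hC).mem hf
  exact (Triangle.isZero₃_iff_isIso₁ _ hC).1 hCzero

end

/-- Lemma on interchanging / composing the cones of two distinguished triangles with a common
middle object `F`, in a triangulated category `T` (satisfying the octahedral axiom):

(a) if `g⟦1⟧' ∘ f = 0` then there are distinguished triangles `E ⟶ F'' ⟶ B ⟶ E⟦1⟧` and
`F'' ⟶ G ⟶ A ⟶ F''⟦1⟧`;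

(b) if `g⟦1⟧' ∘ f` is an isomorphism, then the composite `E ⟶ F ⟶ G` is an isomorphism. -/
theorem statement_0 {T : Type u} [Category.{v} T] [Preadditive T] [HasZeroObject T]
    [HasShift T ℤ] [∀ n : ℤ, (CategoryTheory.shiftFunctor T n).Additive] [Pretriangulated T]
    [IsTriangulated T]
    {E F G A B : T} (e : E ⟶ F) (g : F ⟶ A) (d : A ⟶ E⟦(1 : ℤ)⟧)
    (u : F ⟶ G) (w : G ⟶ B) (f : B ⟶ F⟦(1 : ℤ)⟧)
    (h₁ : Triangle.mk e g d ∈ (distTriang T))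
    (h₂ : Triangle.mk u w f ∈ (distTriang T)) :
    (f ≫ g⟦(1 : ℤ)⟧' = 0 →
      ∃ (F'' : T) (e' : E ⟶ F'') (p : F'' ⟶ B) (q : B ⟶ E⟦(1 : ℤ)⟧)
        (r : F'' ⟶ G) (s : G ⟶ A) (t : A ⟶ F''⟦(1 : ℤ)⟧),
        Triangle.mk e' p q ∈ (distTriang T) ∧ Triangle.mk r s t ∈ (distTriang T)) ∧
    (IsIso (f ≫ g⟦(1 : ℤ)⟧') → IsIso (e ≫ u)) :=
  ⟨exists_distinguished_triangles_of_comp_shift_map_eq_zero h₁ h₂,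
    isIso_comp_of_isIso_comp_shift_map h₁ h₂⟩

end NC
end

section
/- Let σ be a locally finite stability condition on 𝒯 and let ℰ = (E₀, …, Eₙ) be a full σ-exceptional collection with φ_σ(Eᵢ) < φ_σ(Eᵢ₊₁) for all 0 ≤ i < n. Then every σ-semistable exceptional object of 𝒯 is isomorphic to Eᵢ[j] for some 0 ≤ i ≤ n and j ∈ ℤ; in particular, up to shift and isomorphism there are exactly n+1 σ-semistable exceptional objects in 𝒯. -/
open CategoryTheory Limits Pretriangulated

universe v u

namespace NC

variable (T : Type u) [Category.{v} T] [Preadditive T] [HasZeroObject T]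
  [HasShift T ℤ] [∀ n : ℤ, (CategoryTheory.shiftFunctor T n).Additive] [Pretriangulated T]

/-- A Bridgeland stability condition on the pretriangulated category `T`.
The slicing `𝒫` is encoded by the classes of objects `P φ` (strictly full additive
subcategories), and the central charge is encoded as a function on objects which is
additive on distinguished triangles (equivalently, a group homomorphism `K₀(T) → ℂ`).
(The technical condition of local finiteness is not encoded.) -/
structure Stab where
  /-- the slicing: `P φ` is the class of objects of `𝒫(φ)` -/
  P : ℝ → Set T
  /-- the central charge -/
  Z : T → ℂ
  iso_closed : ∀ {X Y : T}, (X ≅ Y) → ∀ {φ : ℝ}, X ∈ P φ → Y ∈ P φ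
  zero_mem : ∀ {X : T}, IsZero X → ∀ φ : ℝ, X ∈ P φ
  shift_mem : ∀ (X : T) (φ : ℝ), X ∈ P φ ↔ X⟦(1 : ℤ)⟧ ∈ P (φ + 1)
  hom_zero : ∀ {X Y : T} {φ ψ : ℝ}, X ∈ P φ → Y ∈ P ψ → ψ < φ → ∀ f : X ⟶ Y, f = 0
  Z_additive : ∀ Tr : Triangle T, Tr ∈ (distTriang T) → Z Tr.obj₂ = Z Tr.obj₁ + Z Tr.obj₃
  Z_phase : ∀ {A : T} {φ : ℝ}, A ∈ P φ → ¬ IsZero A →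
      ∃ m : ℝ, 0 < m ∧ Z A = (m : ℂ) * Complex.exp ((Real.pi * φ : ℝ) * Complex.I)
  HN : ∀ X : T, ¬ IsZero X → ∃ (n : ℕ) (F : Fin (n + 1) → T) (φs : Fin n → ℝ)
      (A : Fin n → T),
      IsZero (F 0) ∧ F (Fin.last n) = X ∧
      (∀ i : Fin n, A i ∈ P (φs i) ∧ ¬ IsZero (A i)) ∧
      (∀ i j : Fin n, i < j → φs j < φs i) ∧
      (∀ i : Fin n, ∃ (f : F i.castSucc ⟶ F i.succ) (g : F i.succ ⟶ A i)
        (h : A i ⟶ (F i.castSucc)⟦(1 : ℤ)⟧), Triangle.mk f g h ∈ (distTriang T))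

variable {T}

/-- an object is `σ`-semistable if it is a nonzero object of some `𝒫(φ)` -/
def Stab.semistable (σ : Stab T) (X : T) : Prop := ¬ IsZero X ∧ ∃ φ : ℝ, X ∈ σ.P φ

/-- `X` is `σ`-semistable of phase `φ` -/
def Stab.hasPhase (σ : Stab T) (X : T) (φ : ℝ) : Prop := ¬ IsZero X ∧ X ∈ σ.P φ

/-- membership in the smallest strictly full triangulated subcategory of `T`
containing the class `S` -/
inductive GeneratedBy (S : Set T) : T → Prop
  | of {X : T} (hX : X ∈ S) : GeneratedBy S X
  | zero {X : T} (hX : IsZero X) : GeneratedBy S X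
  | iso {X Y : T} (e : X ≅ Y) (hX : GeneratedBy S X) : GeneratedBy S Y
  | shift {X : T} (n : ℤ) (hX : GeneratedBy S X) : GeneratedBy S (X⟦n⟧)
  | ext (Tr : Triangle T) (hTr : Tr ∈ (distTriang T)) (h₁ : GeneratedBy S Tr.obj₁)
      (h₃ : GeneratedBy S Tr.obj₃) : GeneratedBy S Tr.obj₂

section LinearDefs

variable (K : Type) [Field K] [CategoryTheory.Linear K T]

/-- an exceptional object of the `K`-linear category `T`:
`Hom(E, E) = K` and `Hom(E, E⟦n⟧) = 0` for `n ≠ 0` -/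
def IsExcT (E : T) : Prop :=
  Module.finrank K (E ⟶ E) = 1 ∧ ∀ n : ℤ, n ≠ 0 → ∀ f : E ⟶ E⟦n⟧, f = 0

/-- properness of the `K`-linear category `T`: `∑ᵢ hom^i(X, Y) < ∞` for all `X`, `Y` -/
def IsProper : Prop :=
  ∀ X Y : T, {n : ℤ | ∃ f : X ⟶ Y⟦n⟧, f ≠ 0}.Finite ∧
    ∀ n : ℤ, FiniteDimensional K (X ⟶ Y⟦n⟧)

end LinearDefs

/-- the vertices of the triangular quiver -/
inductive V3 : Type | x | z | y

/-- the arrows of the triangular quiver: `x ⟶ z`, `z ⟶ y`, `x ⟶ y` -/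
inductive A3 : V3 → V3 → Type
  | xz : A3 .x .z
  | zy : A3 .z .y
  | xy : A3 .x .y

instance : Quiver V3 := ⟨A3⟩

/-- the category of all representations of the quiver `V` over `K`,
i.e. functors from the path category of `V` to `K`-vector spaces -/
abbrev RepAll (K : Type) [Field K] (V : Type) [Quiver.{0} V] := Paths V ⥤ ModuleCat.{0} K

/-- finite dimensionality of a representation -/
def fd (K : Type) [Field K] {V : Type} [Quiver.{0} V] (F : RepAll K V) : Prop :=
  ∀ v : Paths V, FiniteDimensional K (F.obj v)

/-- the category of finite-dimensional representations of the quiver `V` over `K` -/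
abbrev Rep (K : Type) [Field K] (V : Type) [Quiver.{0} V] :=
  ObjectProperty.FullSubcategory (fun F : RepAll K V => fd K F)

/-- the dimension of a representation of the triangular quiver at a vertex -/
noncomputable def dimAt (K : Type) [Field K] (F : RepAll K V3) (v : V3) : ℕ :=
  Module.finrank K (F.obj ((Paths.of V3).obj v))

/-- `F` has dimension vector `(nx, nz, ny)` at the vertices `(x, z, y)` -/
def dimVec (K : Type) [Field K] (F : RepAll K V3) (nx nz ny : ℕ) : Prop :=
  dimAt K F .x = nx ∧ dimAt K F .z = nz ∧ dimAt K F .y = ny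

/-- A representation `E` is exceptional if `End(E) = 𝕂` and `Ext¹(E, E) = 0`
(i.e. every self-extension of `E` splits). -/
def IsExcRep (K : Type) [Field K] {V : Type} [Quiver.{0} V] (E : Rep K V) : Prop :=
  Module.finrank K (E.obj ⟶ E.obj) = 1 ∧
  ∀ S : ShortComplex (RepAll K V), S.ShortExact → (S.X₁ ≅ E.obj) → (S.X₃ ≅ E.obj) →
    Nonempty S.Splitting

variable (T)

/-- Data exhibiting the pretriangulated `K`-linear category `T` as (a model of) the bounded
derived category `D^b(Rep_K V)` of the finite-dimensional representations of the quiver `V`: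
a fully faithful additive `K`-linear embedding `ι` of the heart such that homs between heart
objects are concentrated in shift-degrees `0` and `1` (the heart is hereditary), short exact
sequences of representations induce distinguished triangles, the cone of any map
`ι X → (ι Y)⟦1⟧` lies in the heart, and every object decomposes as a finite direct sum of
shifts of heart objects. -/
structure DerivedEmbedding (K : Type) [Field K] (V : Type) [Quiver.{0} V]
    [CategoryTheory.Linear K T] [HasFiniteBiproducts T] where
  ι : Rep K V ⥤ T
  full : ι.Full
  faithful : ι.Faithful
  additive : ι.Additive
  linear : ι.Linear K
  hom_vanish : ∀ (X Y : Rep K V) (n : ℤ), n ≠ 0 → n ≠ 1 →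
      ∀ f : ι.obj X ⟶ (ι.obj Y)⟦n⟧, f = 0
  triangle_of_ses : ∀ (S : ShortComplex (RepAll K V)) (_ : S.ShortExact)
      (h₁ : fd K S.X₁) (h₂ : fd K S.X₂) (h₃ : fd K S.X₃),
      ∃ δ : ι.obj ⟨S.X₃, h₃⟩ ⟶ (ι.obj ⟨S.X₁, h₁⟩)⟦(1 : ℤ)⟧,
        Triangle.mk (ι.map (X := ⟨S.X₁, h₁⟩) (Y := ⟨S.X₂, h₂⟩) (ObjectProperty.homMk S.f))
          (ι.map (X := ⟨S.X₂, h₂⟩) (Y := ⟨S.X₃, h₃⟩) (ObjectProperty.homMk S.g)) δ ∈ (distTriang T)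
  heart_ext : ∀ (X Y : Rep K V) (W : T) (f : ι.obj Y ⟶ W) (g : W ⟶ ι.obj X)
      (δ : ι.obj X ⟶ (ι.obj Y)⟦(1 : ℤ)⟧), Triangle.mk f g δ ∈ (distTriang T) →
      ∃ Z : Rep K V, Nonempty (W ≅ ι.obj Z)
  decomp : ∀ W : T, ∃ (n : ℕ) (R : Fin n → Rep K V) (k : Fin n → ℤ),
      Nonempty (W ≅ ⨁ (fun i : Fin n => (ι.obj (R i))⟦k i⟧))

variable (K : Type) [Field K] [CategoryTheory.Linear K T] [HasFiniteBiproducts T]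

/-- The standard set-up on the triangular quiver: `T` is a model of `D^b(Rep_K Q)` where `Q`
is the triangular quiver, and `E₁ E₂ E₃ E₄ M M'` are the exceptional representations with
the indicated dimension vectors (each is unique up to isomorphism). -/
structure TriSetup where
  D : DerivedEmbedding T K V3
  E₁ : ℕ → Rep K V3
  E₂ : ℕ → Rep K V3
  E₃ : ℕ → Rep K V3
  E₄ : ℕ → Rep K V3
  M : Rep K V3
  M' : Rep K V3
  hE₁ : ∀ m : ℕ, IsExcRep K (E₁ m) ∧ dimVec K (E₁ m).obj (m + 1) m m
  hE₂ : ∀ m : ℕ, IsExcRep K (E₂ m) ∧ dimVec K (E₂ m).obj m (m + 1) (m + 1)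
  hE₃ : ∀ m : ℕ, IsExcRep K (E₃ m) ∧ dimVec K (E₃ m).obj m (m + 1) m
  hE₄ : ∀ m : ℕ, IsExcRep K (E₄ m) ∧ dimVec K (E₄ m).obj (m + 1) m (m + 1)
  hM : IsExcRep K M ∧ dimVec K M.obj 0 0 1
  hM' : IsExcRep K M' ∧ dimVec K M'.obj 1 1 0

variable {T K}

/-- the objects `a^m` of `𝒯`: `a^m = E₁^{-m}` for `m ≤ 0` and `a^m = E₂^{m-1}[1]` for `m ≥ 1` -/
noncomputable def TriSetup.a (S : TriSetup T K) (m : ℤ) : T :=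
  if m ≤ 0 then S.D.ι.obj (S.E₁ (-m).toNat) else (S.D.ι.obj (S.E₂ (m - 1).toNat))⟦(1 : ℤ)⟧

/-- the objects `b^m` of `𝒯`: `b^m = E₄^{-m}` for `m ≤ 0` and `b^m = E₃^{m-1}[1]` for `m ≥ 1` -/
noncomputable def TriSetup.b (S : TriSetup T K) (m : ℤ) : T :=
  if m ≤ 0 then S.D.ι.obj (S.E₄ (-m).toNat) else (S.D.ι.obj (S.E₃ (m - 1).toNat))⟦(1 : ℤ)⟧

/-- the object `M` of `𝒯` -/
noncomputable def TriSetup.Mo (S : TriSetup T K) : T := S.D.ι.obj S.M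

/-- the object `M'` of `𝒯` -/
noncomputable def TriSetup.Mo' (S : TriSetup T K) : T := S.D.ι.obj S.M'


end NC

/-!
Write `G (t, i) = Eᵢ⟦t⟧`. The hom conditions on the collection say that nonzero maps between
the `G`'s only go up in the lexicographic order of `(t, i)`, and by the phase conditions this
is also the order of their phases. Repeatedly coning off a nonzero map from the
lexicographically largest `G` mapping to an object builds a tower of triangles for it whose
factors decrease in that order. For `X` semistable of phase `φ`, the first factor maps nonzero
to `X`, so has phase `≤ φ`, and `X` maps nonzero to the last factor, which therefore has phase
`≥ φ`. Hence all factors are the same `G q`; as `Hom(G q, G q⟦1⟧) = 0` the first connecting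
map vanishes, so `G q` is a direct summand of `X`, and `End X = K` forces `X ≅ G q`.
-/

namespace CategoryTheory

section Linear

variable {K : Type*} [Field K] {C : Type*} [Category C] [Preadditive C] [Linear K C]

lemma exists_eq_smul_id_of_finrank_end_eq_one {X : C} (hX : Module.finrank K (X ⟶ X) = 1)
    (f : X ⟶ X) : ∃ a : K, f = a • 𝟙 X := by
  have hid : 𝟙 X ≠ 0 := fun h => by
    have : Subsingleton (X ⟶ X) := ⟨((IsZero.iff_id_eq_zero X).2 h).eq_of_src⟩
    rw [Module.finrank_zero_of_subsingleton] at hX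
    exact zero_ne_one hX
  obtain ⟨a, ha⟩ := (finrank_eq_one_iff_of_nonzero' (𝟙 X) hid).1 hX f
  exact ⟨a, ha.symm⟩

lemma isIso_of_ne_zero_of_finrank_end_eq_one {X : C} (hX : Module.finrank K (X ⟶ X) = 1)
    {f : X ⟶ X} (hf : f ≠ 0) : IsIso f := by
  obtain ⟨a, rfl⟩ := exists_eq_smul_id_of_finrank_end_eq_one hX f
  have ha : a ≠ 0 := by rintro rfl; exact hf (zero_smul K _)
  exact ⟨a⁻¹ • 𝟙 X, by simp [smul_smul, ha], by simp [smul_smul, ha]⟩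

lemma isIso_of_comp_eq_id_of_finrank_end_eq_one {A X : C} (hX : Module.finrank K (X ⟶ X) = 1)
    (hA : ¬ IsZero A) {u : A ⟶ X} {r : X ⟶ A} (hur : u ≫ r = 𝟙 A) : IsIso u := by
  obtain ⟨a, ha⟩ := exists_eq_smul_id_of_finrank_end_eq_one hX (r ≫ u)
  have hu : u ≠ 0 := fun h => hA <| (IsZero.iff_id_eq_zero A).2 <| by rw [← hur, h, zero_comp]
  have h1 : (1 - a) • u = 0 := by
    rw [sub_smul, one_smul, sub_eq_zero]
    calc u = u ≫ r ≫ u := by rw [← Category.assoc, hur, Category.id_comp]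
      _ = a • u := by rw [ha, Linear.comp_smul, Category.comp_id]
  obtain rfl : a = 1 := (sub_eq_zero.1 ((smul_eq_zero.1 h1).resolve_right hu)).symm
  exact ⟨r, hur, by rw [ha, one_smul]⟩

end Linear

section Shift

variable {C : Type*} [Category C] [HasShift C ℤ]

lemma nontrivial_shift_hom_iff (X Y : C) (a : ℤ) :
    Nontrivial (X⟦a⟧ ⟶ Y) ↔ Nontrivial (X ⟶ Y⟦-a⟧) :=
  ((shiftEquiv C a).toAdjunction.homEquiv X Y).nontrivial_congr

lemma nontrivial_shift_hom_shift_iff (X Y : C) (a b : ℤ) :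
    Nontrivial (X⟦a⟧ ⟶ Y⟦b⟧) ↔ Nontrivial (X ⟶ Y⟦b - a⟧) := by
  rw [nontrivial_shift_hom_iff]
  exact ((Iso.refl X).homCongr
    ((shiftFunctorAdd' C b (-a) (b - a) (by omega)).app Y).symm).nontrivial_congr

lemma isIso_of_ne_zero_of_shift [Preadditive C] [∀ n : ℤ, (shiftFunctor C n).Additive] {X : C}
    (hX : ∀ f : X ⟶ X, f ≠ 0 → IsIso f) (a : ℤ) {f : X⟦a⟧ ⟶ X⟦a⟧} (hf : f ≠ 0) : IsIso f := by
  obtain ⟨g, rfl⟩ := (shiftFunctor C a).map_surjective f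
  have := hX g (by rintro rfl; exact hf (Functor.map_zero _ _ _))
  infer_instance

end Shift

namespace Pretriangulated.Triangle

variable {C : Type*} [Category C] [Preadditive C] [HasZeroObject C] [HasShift C ℤ]
  [∀ n : ℤ, (CategoryTheory.shiftFunctor C n).Additive] [Pretriangulated C]
  {X₁ X₂ X₃ : C} {f₁ : X₁ ⟶ X₂} {f₂ : X₂ ⟶ X₃} {f₃ : X₃ ⟶ X₁⟦(1 : ℤ)⟧}

lemma nontrivial_hom_obj₂_or_exists_comp_mor₃_ne_zero (hTr : Triangle.mk f₁ f₂ f₃ ∈ distTriang C)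
    {W : C} (h : Nontrivial (W ⟶ X₃)) : Nontrivial (W ⟶ X₂) ∨ ∃ f : W ⟶ X₃, f ≫ f₃ ≠ 0 := by
  obtain ⟨f, hf⟩ := exists_ne (0 : W ⟶ X₃)
  by_cases hf₃ : f ≫ f₃ = 0
  · obtain ⟨g, rfl⟩ := coyoneda_exact₃ _ hTr f hf₃
    exact Or.inl (nontrivial_of_ne g 0 (by rintro rfl; exact hf zero_comp))
  · exact Or.inr ⟨f, hf₃⟩

lemma mor₁_eq_zero_of_isIso_comp_mor₃ (hTr : Triangle.mk f₁ f₂ f₃ ∈ distTriang C) {A : C}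
    (f : A ⟶ X₃) (e : X₁⟦(1 : ℤ)⟧ ≅ A) (h : IsIso (f ≫ f₃ ≫ e.hom)) : f₁ = 0 := by
  have : Epi (f₃ ≫ e.hom) := epi_of_epi f _
  have : Epi f₃ := by simpa using (inferInstance : Epi ((f₃ ≫ e.hom) ≫ e.inv))
  exact mor₁_eq_zero_of_epi₃ _ hTr this

lemma finrank_hom_obj₃_lt {K : Type*} [Field K] [Linear K C]
    (hTr : Triangle.mk f₁ f₂ f₃ ∈ distTriang C) [FiniteDimensional K (X₁ ⟶ X₂)]
    [h₁ : Subsingleton (X₁ ⟶ X₁⟦(1 : ℤ)⟧)] (h : f₁ ≠ 0) :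
    Module.finrank K (X₁ ⟶ X₃) < Module.finrank K (X₁ ⟶ X₂) := by
  let β := Linear.rightComp K X₁ f₂
  have hβ : LinearMap.range β = ⊤ := LinearMap.range_eq_top.2 fun g => by
    obtain ⟨g', hg'⟩ := coyoneda_exact₃ _ hTr g (h₁.allEq _ _)
    exact ⟨g', hg'.symm⟩
  have hker : 0 < Module.finrank K (LinearMap.ker β) :=
    Module.finrank_pos_iff_exists_ne_zero.2
      ⟨⟨f₁, comp_distTriang_mor_zero₁₂ _ hTr⟩, fun h₀ => h (congrArg Subtype.val h₀)⟩
  have := LinearMap.finrank_range_add_finrank_ker β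
  rw [hβ, finrank_top] at this
  omega

end Pretriangulated.Triangle

end CategoryTheory

namespace NC

section Shifts

variable {C : Type*} [Category C] [HasShift C ℤ]

abbrev shifts {ι : Type*} (E : ι → C) (q : ℤ × ι) : C := (E q.2)⟦q.1⟧

def homSupport {ι : Type*} (G : ι → C) (Y : C) : Set ι := {q | Nontrivial (G q ⟶ Y)}

lemma mem_homSupport_shifts_iff {ι : Type*} {E : ι → C} {Y : C} {q : ℤ × ι} :
    q ∈ homSupport (shifts E) Y ↔ Nontrivial (E q.2 ⟶ Y⟦-q.1⟧) :=
  nontrivial_shift_hom_iff _ _ _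

lemma nontrivial_shifts_hom_iff {ι : Type*} (E : ι → C) (q q' : ℤ × ι) :
    Nontrivial (shifts E q ⟶ shifts E q') ↔ Nontrivial (E q.2 ⟶ (E q'.2)⟦q'.1 - q.1⟧) :=
  nontrivial_shift_hom_shift_iff _ _ _ _

def shiftsShiftOneIso {ι : Type*} (E : ι → C) (q : ℤ × ι) :
    (shifts E q)⟦(1 : ℤ)⟧ ≅ shifts E (q.1 + 1, q.2) :=
  ((shiftFunctorAdd' C q.1 1 (q.1 + 1) rfl).app (E q.2)).symm

end Shifts

section Generation

variable {T : Type u} [Category.{v} T] [Preadditive T] [HasZeroObject T] [HasShift T ℤ]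
  [∀ n : ℤ, (shiftFunctor T n).Additive] [Pretriangulated T]

lemma GeneratedBy.subsingleton_shift_hom {S : Set T} {Y : T}
    (hS : ∀ A ∈ S, ∀ m : ℤ, Subsingleton (A⟦m⟧ ⟶ Y)) {W : T} (hW : GeneratedBy S W) (m : ℤ) :
    Subsingleton (W⟦m⟧ ⟶ Y) := by
  induction hW generalizing m with
  | of hX => exact hS _ hX m
  | zero hX => exact ⟨((shiftFunctor T m).map_isZero hX).eq_of_src⟩
  | iso e _ ih =>
    exact (((shiftFunctor T m).mapIso e).homCongr (Iso.refl Y)).symm.subsingleton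
  | @shift X k _ ih =>
    exact (((shiftFunctorAdd T k m).app X).homCongr (Iso.refl Y)).symm.subsingleton
  | ext Tr hTr _ _ ih₁ ih₃ =>
    refine subsingleton_of_forall_eq 0 fun f => ?_
    have hsh := Triangle.shift_distinguished Tr hTr m
    obtain ⟨g, rfl⟩ := Triangle.yoneda_exact₂ _ hsh f ((ih₁ m).allEq _ _)
    rw [show g = 0 from (ih₃ m).allEq g 0]; exact comp_zero

lemma GeneratedBy.isZero {S : Set T} {Y : T} (hS : ∀ A ∈ S, ∀ m : ℤ, Subsingleton (A⟦m⟧ ⟶ Y))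
    (hY : GeneratedBy S Y) : IsZero Y := by
  have := (((shiftFunctorZero T ℤ).app Y).homCongr (Iso.refl Y)).subsingleton_congr.1
    (hY.subsingleton_shift_hom hS 0)
  exact (IsZero.iff_id_eq_zero Y).2 (this.allEq _ _)

end Generation

section Tower

variable {C : Type*} [Category C] [Preadditive C] [HasZeroObject C] [HasShift C ℤ]
  [∀ n : ℤ, (shiftFunctor C n).Additive] [Pretriangulated C] {ι : Type*}

inductive Tower (G : ι → C) : List ι → C → Prop
  | nil {Y : C} (hY : IsZero Y) : Tower G [] Y
  | cons {Y Y' : C} {q : ι} {L : List ι} (u : G q ⟶ Y) (p : Y ⟶ Y')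
      (δ : Y' ⟶ (G q)⟦(1 : ℤ)⟧) (hTr : Triangle.mk u p δ ∈ distTriang C) (hL : Tower G L Y') :
      Tower G (q :: L) Y

variable {G : ι → C}

lemma Tower.subsingleton_hom {L : List ι} {Y : C} (h : Tower G L Y) {Z : C}
    (hZ : ∀ q ∈ L, Subsingleton (G q ⟶ Z)) : Subsingleton (Y ⟶ Z) := by
  induction h with
  | nil hY => exact ⟨hY.eq_of_src⟩
  | cons u p δ hTr _ ih =>
    refine subsingleton_of_forall_eq 0 fun f => ?_
    have hY' := ih fun q hq => hZ q (List.mem_cons_of_mem _ hq)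
    obtain ⟨g, rfl⟩ := Triangle.yoneda_exact₂ _ hTr f ((hZ _ List.mem_cons_self).allEq _ _)
    rw [show g = 0 from hY'.allEq g 0]; exact comp_zero

lemma Tower.nontrivial_hom_getLast {L : List ι} {Y : C} (h : Tower G L Y) (hL : L ≠ [])
    (hlast : ¬ IsZero (G (L.getLast hL)))
    (hshift : ∀ q ∈ L, Subsingleton ((G q)⟦(1 : ℤ)⟧ ⟶ G (L.getLast hL))) :
    Nontrivial (Y ⟶ G (L.getLast hL)) := by
  induction h with
  | nil => exact absurd rfl hL
  | @cons Y Y' q L u p δ hTr hL' ih =>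
    by_cases hL₀ : L = []
    · subst hL₀
      simp only [List.getLast_singleton] at hlast ⊢
      cases hL' with | nil hY' =>
      have : IsIso u := (Triangle.isZero₃_iff_isIso₁ _ hTr).1 hY'
      exact nontrivial_of_ne (inv u) 0 fun h₀ => hlast <|
        (IsZero.iff_id_eq_zero _).2 (by rw [← IsIso.hom_inv_id u, h₀, comp_zero])
    · simp only [List.getLast_cons hL₀] at hlast hshift ⊢
      have hY' := ih hL₀ hlast fun q hq => hshift q (List.mem_cons_of_mem _ hq)
      obtain ⟨g, hg⟩ := exists_ne (0 : Y' ⟶ G (L.getLast hL₀))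
      refine nontrivial_of_ne (p ≫ g) 0 fun h₀ => hg ?_
      obtain ⟨w, rfl⟩ := Triangle.yoneda_exact₃ _ hTr g h₀
      rw [show w = 0 from (hshift q List.mem_cons_self).allEq w 0]; exact comp_zero

lemma Tower.nonempty_iso_of_forall_mem_eq {K : Type*} [Field K] [Linear K C] {q : ι} {L : List ι}
    {X : C} (h : Tower G (q :: L) X) (hL : ∀ q' ∈ L, q' = q) (hq : ¬ IsZero (G q))
    (hq₁ : Subsingleton (G q ⟶ (G q)⟦(1 : ℤ)⟧)) (hX : Module.finrank K (X ⟶ X) = 1) :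
    Nonempty (G q ≅ X) := by
  cases h with | cons u p δ hTr hL' =>
  have hδ : δ = 0 := (hL'.subsingleton_hom fun q' hq' => hL q' hq' ▸ hq₁).allEq _ _
  have : Mono u := (Triangle.mk u p δ).mono₁ hTr hδ
  have := isSplitMono_of_mono u
  have := isIso_of_comp_eq_id_of_finrank_end_eq_one hX hq (IsSplitMono.id u)
  exact ⟨asIso u⟩

end Tower

section ExceptionalProper

variable {K : Type} [Field K] {T : Type*} [Category T] [Preadditive T] [HasShift T ℤ]
  [Linear K T]

lemma IsExcT.not_isZero {X : T} (hX : IsExcT K X) : ¬ IsZero X := fun h => by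
  have : Subsingleton (X ⟶ X) := ⟨h.eq_of_src⟩
  have := hX.1
  rw [Module.finrank_zero_of_subsingleton] at this
  exact zero_ne_one this

lemma IsExcT.not_isZero_shift [∀ n : ℤ, (shiftFunctor T n).Additive] {X : T} (hX : IsExcT K X)
    (a : ℤ) : ¬ IsZero (X⟦a⟧) := fun h =>
  hX.not_isZero (((shiftFunctor T (-a)).map_isZero h).of_iso (shiftShiftNeg X a).symm)

lemma IsExcT.subsingleton_shift_hom_shift_one {X : T} (hX : IsExcT K X) (a : ℤ) :
    Subsingleton (X⟦a⟧ ⟶ X⟦a⟧⟦(1 : ℤ)⟧) := by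
  refine not_nontrivial_iff_subsingleton.1 fun h => ?_
  have := ((Iso.refl _).homCongr
    ((shiftFunctorAdd' T a 1 (a + 1) rfl).app X).symm).nontrivial_congr.1 h
  rw [nontrivial_shift_hom_shift_iff, add_sub_cancel_left] at this
  obtain ⟨f, hf⟩ := exists_ne (0 : X ⟶ X⟦(1 : ℤ)⟧)
  exact hf (hX.2 1 one_ne_zero f)

lemma IsProper.finiteDimensional_hom (hT : IsProper (T := T) K) (X Y : T) :
    FiniteDimensional K (X ⟶ Y) :=
  have := (hT X Y).2 0
  (Linear.homCongr K (Iso.refl X) ((shiftFunctorZero T ℤ).app Y)).finiteDimensional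

lemma IsProper.homSupport_shifts_finite (hT : IsProper (T := T) K) {n : ℕ}
    (E : Fin (n + 1) → T) (Y : T) : (homSupport (shifts E) Y).Finite := by
  refine (Set.finite_iUnion fun c => ((hT (E c) Y).1.image fun m => (-m, c))).subset ?_
  rintro ⟨t, c⟩ hq
  obtain ⟨f, hf⟩ := @exists_ne _ (mem_homSupport_shifts_iff.1 hq) 0
  exact Set.mem_iUnion.2 ⟨c, -t, ⟨f, hf⟩, by simp⟩

lemma IsProper.exists_hom_shift_bound (hT : IsProper (T := T) K) {n : ℕ} (E : Fin (n + 1) → T) :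
    ∃ Θ : ℤ, 0 ≤ Θ ∧ ∀ c d k, Nontrivial (E c ⟶ (E d)⟦k⟧) → k ≤ Θ := by
  obtain ⟨b, hb⟩ :=
    (Set.finite_iUnion fun c => Set.finite_iUnion fun d => (hT (E c) (E d)).1).bddAbove
  refine ⟨max b 0, le_max_right _ _, fun c d k hk => le_max_of_le_left (hb ?_)⟩
  obtain ⟨f, hf⟩ := exists_ne (0 : E c ⟶ (E d)⟦k⟧)
  exact Set.mem_iUnion₂.2 ⟨c, d, f, hf⟩

end ExceptionalProper

section LexIndex

variable {n : ℕ}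

def lexIndex (q : ℤ × Fin (n + 1)) : ℤ := q.1 * (n + 1) + q.2

lemma lexIndex_lt_iff {q q' : ℤ × Fin (n + 1)} :
    lexIndex q < lexIndex q' ↔ q.1 < q'.1 ∨ q.1 = q'.1 ∧ q.2 < q'.2 := by
  obtain ⟨t, c⟩ := q
  obtain ⟨t', c'⟩ := q'
  have hc : (c : ℤ) < n + 1 := by exact_mod_cast c.is_lt
  have hc' : (c' : ℤ) < n + 1 := by exact_mod_cast c'.is_lt
  simp only [lexIndex, Fin.lt_def, ← Int.ofNat_lt]
  constructor
  · intro h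
    rcases lt_trichotomy t t' with htt | rfl | htt
    · exact Or.inl htt
    · exact Or.inr ⟨rfl, by linarith⟩
    · nlinarith
  · rintro (htt | ⟨rfl, hcc⟩)
    · nlinarith
    · linarith

lemma lexIndex_injective : Function.Injective (lexIndex (n := n)) := fun q q' h => by
  have h₁ := mt lexIndex_lt_iff.2 h.not_lt
  have h₂ := mt lexIndex_lt_iff.2 h.not_gt
  push Not at h₁ h₂
  have ht : q.1 = q'.1 := le_antisymm h₂.1 h₁.1
  exact Prod.ext ht (le_antisymm (h₂.2 ht.symm) (h₁.2 ht))

lemma mul_le_lexIndex {β : ℤ} {q : ℤ × Fin (n + 1)} (h : β ≤ q.1) :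
    β * (n + 1) ≤ lexIndex q := by
  have : (0 : ℤ) ≤ q.2 := by positivity
  unfold lexIndex
  nlinarith

end LexIndex

section Collection

variable {K : Type} [Field K] {T : Type u} [Category.{v} T] [Preadditive T] [HasZeroObject T]
  [HasShift T ℤ] [∀ n : ℤ, (shiftFunctor T n).Additive] [Pretriangulated T] [Linear K T]
  {n : ℕ} {E : Fin (n + 1) → T}

variable (K) in
structure IsFullExtExceptional (E : Fin (n + 1) → T) : Prop where
  isExc : ∀ i, IsExcT K (E i)
  hom_eq_zero_of_gt : ∀ i j : Fin (n + 1), j < i → ∀ (k : ℤ) (f : E i ⟶ (E j)⟦k⟧), f = 0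
  generates : ∀ X : T, GeneratedBy (Set.range E) X
  hom_eq_zero_of_nonpos :
    ∀ i j : Fin (n + 1), i ≠ j → ∀ k : ℤ, k ≤ 0 → ∀ f : E i ⟶ (E j)⟦k⟧, f = 0

namespace IsFullExtExceptional

lemma nontrivial_hom_cases (hE : IsFullExtExceptional K E) {c d : Fin (n + 1)} {k : ℤ}
    (h : Nontrivial (E c ⟶ (E d)⟦k⟧)) :
    c = d ∧ k = 0 ∨ c < d ∧ 0 < k := by
  obtain ⟨f, hf⟩ := exists_ne (0 : E c ⟶ (E d)⟦k⟧)
  rcases lt_trichotomy c d with hcd | rfl | hcd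
  · exact Or.inr ⟨hcd, not_le.1 fun hk => hf (hE.hom_eq_zero_of_nonpos c d hcd.ne k hk f)⟩
  · exact Or.inl ⟨rfl, by_contra fun hk => hf ((hE.isExc c).2 k hk f)⟩
  · exact absurd (hE.hom_eq_zero_of_gt c d hcd k f) hf

lemma homSupport_nonempty (hE : IsFullExtExceptional K E) {Y : T} (hY : ¬ IsZero Y) :
    (homSupport (shifts E) Y).Nonempty := by
  by_contra h
  refine hY ((hE.generates Y).isZero ?_)
  rintro _ ⟨c, rfl⟩ m
  exact not_nontrivial_iff_subsingleton.1 fun hm => h ⟨(m, c), hm⟩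

/-- The hom conditions alone would also allow `q = (qm.1 + 1, qm.2)`; that case is excluded
because a nontrivial map from it would make the connecting map split epi, forcing `u = 0`. -/
lemma mem_homSupport_cone (hE : IsFullExtExceptional K E) {Y Y' : T} {qm : ℤ × Fin (n + 1)}
    {u : shifts E qm ⟶ Y} {p : Y ⟶ Y'}
    {δ : Y' ⟶ (shifts E qm)⟦(1 : ℤ)⟧} (hTr : Triangle.mk u p δ ∈ distTriang T) (hu : u ≠ 0)
    {q : ℤ × Fin (n + 1)} (hq : q ∈ homSupport (shifts E) Y') :
    q ∈ homSupport (shifts E) Y ∨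
      q.2 < qm.2 ∧ 0 < qm.1 + 1 - q.1 ∧ Nontrivial (E q.2 ⟶ (E qm.2)⟦qm.1 + 1 - q.1⟧) := by
  rcases Triangle.nontrivial_hom_obj₂_or_exists_comp_mor₃_ne_zero hTr hq with h | ⟨f, hf⟩
  · exact Or.inl h
  let e := shiftsShiftOneIso E qm
  have hf' : f ≫ δ ≫ e.hom ≠ 0 := by
    rwa [← Category.assoc, Ne, Preadditive.IsIso.comp_right_eq_zero]
  have hne := (nontrivial_shifts_hom_iff E q _).1 (nontrivial_of_ne _ 0 hf')
  dsimp only at hne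
  rcases hE.nontrivial_hom_cases hne with ⟨hc, hk⟩ | ⟨hc, hk⟩
  · obtain ⟨t, c⟩ := q
    obtain rfl : t = qm.1 + 1 := by simp only at hk; omega
    obtain rfl : c = qm.2 := hc
    have := isIso_of_ne_zero_of_shift
      (fun g hg => isIso_of_ne_zero_of_finrank_end_eq_one (hE.isExc qm.2).1 hg) _ hf'
    exact absurd (Triangle.mor₁_eq_zero_of_isIso_comp_mor₃ hTr f e this) hu
  · exact Or.inr ⟨hc, hk, hne⟩

lemma homSupport_cone_bounds (hE : IsFullExtExceptional K E) {Θ β : ℤ} (hΘ₀ : 0 ≤ Θ)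
    (hΘ : ∀ c d k, Nontrivial (E c ⟶ (E d)⟦k⟧) → k ≤ Θ) {Y Y' : T} {qm : ℤ × Fin (n + 1)}
    {u : shifts E qm ⟶ Y} {p : Y ⟶ Y'} {δ : Y' ⟶ (shifts E qm)⟦(1 : ℤ)⟧}
    (hTr : Triangle.mk u p δ ∈ distTriang T) (hu : u ≠ 0)
    (hβ : ∀ q ∈ homSupport (shifts E) Y, β ≤ q.1 - Θ * q.2) (hqm : qm ∈ homSupport (shifts E) Y)
    (hmax : ∀ q ∈ homSupport (shifts E) Y, lexIndex q ≤ lexIndex qm)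
    {q : ℤ × Fin (n + 1)} (hq : q ∈ homSupport (shifts E) Y') :
    β ≤ q.1 - Θ * q.2 ∧ lexIndex q ≤ lexIndex qm := by
  rcases hE.mem_homSupport_cone hTr hu hq with hq | ⟨hc, hk, hne⟩
  · exact ⟨hβ q hq, hmax q hq⟩
  have hΘk := hΘ _ _ _ hne
  have hc' : (q.2 : ℤ) + 1 ≤ qm.2 := by exact_mod_cast hc
  exact ⟨by nlinarith [hβ qm hqm], (lexIndex_lt_iff.2 (by omega)).le⟩

/-- Peeling off the top shifted member repeatedly terminates: the top index never increases,
and while it stays the same the dimension of its hom space drops. The index cannot decrease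
forever because `t - Θ i` stays bounded below on the support, `Θ` bounding the shifts in which
members of the collection have nonzero homs. -/
theorem exists_tower_of_bound (hE : IsFullExtExceptional K E) (hT : IsProper (T := T) K)
    {Θ β : ℤ} (hΘ₀ : 0 ≤ Θ) (hΘ : ∀ c d k, Nontrivial (E c ⟶ (E d)⟦k⟧) → k ≤ Θ)
    {Y : T} (hβ : ∀ q ∈ homSupport (shifts E) Y, β ≤ q.1 - Θ * q.2)
    {qm : ℤ × Fin (n + 1)} (hqm : qm ∈ homSupport (shifts E) Y)
    (hmax : ∀ q ∈ homSupport (shifts E) Y, lexIndex q ≤ lexIndex qm) :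
    ∃ L, Tower (shifts E) (qm :: L) Y ∧
      (qm :: L).Pairwise (fun a b => lexIndex b ≤ lexIndex a) := by
  obtain ⟨R, hR⟩ : ∃ R : ℕ, (lexIndex qm - β * (n + 1)).toNat = R := ⟨_, rfl⟩
  induction R using Nat.strong_induction_on generalizing Y qm with | _ R ihR =>
  obtain ⟨D, hD⟩ : ∃ D : ℕ, Module.finrank K (shifts E qm ⟶ Y) = D := ⟨_, rfl⟩
  induction D using Nat.strong_induction_on generalizing Y with | _ D ihD =>
  obtain ⟨u, hu⟩ := @exists_ne _ hqm 0
  obtain ⟨Y', p, δ, hTr⟩ := distinguished_cocone_triangle u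
  by_cases hY' : IsZero Y'
  · exact ⟨[], .cons u p δ hTr (.nil hY'), List.pairwise_singleton _ _⟩
  have hcone (q) (hq : q ∈ homSupport (shifts E) Y') :=
    hE.homSupport_cone_bounds hΘ₀ hΘ hTr hu hβ hqm hmax hq
  obtain ⟨qm', hqm', hmax'⟩ := Set.exists_max_image _ lexIndex
    (hT.homSupport_shifts_finite E Y') (hE.homSupport_nonempty hY')
  obtain ⟨L, hL, hsorted⟩ : ∃ L, Tower (shifts E) (qm' :: L) Y' ∧
      (qm' :: L).Pairwise (fun a b => lexIndex b ≤ lexIndex a) := by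
    rcases (hcone qm' hqm').2.lt_or_eq with hlt | heq
    · have hpos : 0 ≤ Θ * qm'.2 := by positivity
      have := mul_le_lexIndex (show β ≤ qm'.1 by linarith [(hcone qm' hqm').1])
      exact ihR _ (by omega) (fun q hq => (hcone q hq).1) hqm' hmax' rfl
    · obtain rfl := lexIndex_injective heq
      have := hT.finiteDimensional_hom (shifts E qm') Y
      have := (hE.isExc qm'.2).subsingleton_shift_hom_shift_one qm'.1
      exact ihD _ (hD ▸ Triangle.finrank_hom_obj₃_lt hTr hu) (fun q hq => (hcone q hq).1) hqm'
        hmax' rfl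
  refine ⟨qm' :: L, .cons u p δ hTr hL, List.pairwise_cons.2 ⟨fun q hq => ?_, hsorted⟩⟩
  rcases List.mem_cons.1 hq with rfl | hq
  · exact (hcone q hqm').2
  · exact ((List.pairwise_cons.1 hsorted).1 q hq).trans (hcone qm' hqm').2

theorem exists_tower (hE : IsFullExtExceptional K E) (hT : IsProper (T := T) K) {Y : T}
    (hY : ¬ IsZero Y) : ∃ qm ∈ homSupport (shifts E) Y, ∃ L, Tower (shifts E) (qm :: L) Y ∧
      (qm :: L).Pairwise (fun a b => lexIndex b ≤ lexIndex a) := by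
  obtain ⟨Θ, hΘ₀, hΘ⟩ := hT.exists_hom_shift_bound E
  have hfin := hT.homSupport_shifts_finite E Y
  obtain ⟨β, hβ⟩ := (hfin.image fun q => q.1 - Θ * q.2).bddBelow
  obtain ⟨qm, hqm, hmax⟩ := Set.exists_max_image _ lexIndex hfin (hE.homSupport_nonempty hY)
  exact ⟨qm, hqm, hE.exists_tower_of_bound hT hΘ₀ hΘ (fun q hq => hβ ⟨q, hq, rfl⟩) hqm hmax⟩

lemma subsingleton_shift_hom_of_lexIndex_le (hE : IsFullExtExceptional K E)
    {q q' : ℤ × Fin (n + 1)} (h : lexIndex q' ≤ lexIndex q) :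
    Subsingleton ((shifts E q)⟦(1 : ℤ)⟧ ⟶ shifts E q') := by
  rw [← not_nontrivial_iff_subsingleton,
    ((shiftsShiftOneIso E q).homCongr (Iso.refl _)).nontrivial_congr, nontrivial_shifts_hom_iff]
  intro hne
  have := hE.nontrivial_hom_cases hne
  dsimp only at this
  have : lexIndex q < lexIndex q' := lexIndex_lt_iff.2 (by omega)
  omega

lemma eq_of_iso_shift (hE : IsFullExtExceptional K E) {i i' : Fin (n + 1)} {j : ℤ}
    (e : E i ≅ (E i')⟦j⟧) : i = i' ∧ j = 0 := by
  have hi := (hE.isExc i).not_isZero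
  have hhom := nontrivial_of_ne e.hom 0 fun h => hi <|
    (IsZero.iff_id_eq_zero _).2 (by rw [← e.hom_inv_id, h, zero_comp])
  have hinv := (nontrivial_shift_hom_iff _ _ _).1 <| nontrivial_of_ne e.inv 0 fun h => hi <|
    (IsZero.iff_id_eq_zero _).2 (by rw [← e.hom_inv_id, h, comp_zero])
  rcases hE.nontrivial_hom_cases hhom with h | ⟨hlt, -⟩
  · exact h
  · rcases hE.nontrivial_hom_cases hinv with ⟨rfl, -⟩ | ⟨hlt', -⟩
    · exact absurd hlt (lt_irrefl _)
    · exact absurd hlt (lt_asymm hlt')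

end IsFullExtExceptional

end Collection

section Stability

variable {K : Type} [Field K] {T : Type u} [Category.{v} T] [Preadditive T] [HasZeroObject T]
  [HasShift T ℤ] [∀ n : ℤ, (shiftFunctor T n).Additive] [Pretriangulated T]

lemma Stab.mem_shift (σ : Stab T) {X : T} {φ : ℝ} (h : X ∈ σ.P φ) (a : ℤ) :
    X⟦a⟧ ∈ σ.P (φ + a) := by
  induction a using Int.induction_on with
  | zero => simpa using σ.iso_closed ((shiftFunctorZero T ℤ).app X).symm h
  | succ k ih =>
    have := σ.iso_closed ((shiftFunctorAdd' T (k : ℤ) 1 (k + 1) rfl).app X).symm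
      ((σ.shift_mem _ _).1 ih)
    rwa [Int.cast_add, Int.cast_one, ← add_assoc]
  | pred k ih =>
    have := σ.iso_closed ((shiftFunctorAdd' T (-(k : ℤ) - 1) 1 (-k) (by ring)).app X) ih
    refine (σ.shift_mem _ _).2 ?_
    rwa [show φ + ((-(k : ℤ) - 1 : ℤ) : ℝ) + 1 = φ + ((-(k : ℤ) : ℤ) : ℝ) by push_cast; ring]

lemma Stab.le_of_nontrivial_hom (σ : Stab T) {X Y : T} {φ ψ : ℝ} (hX : X ∈ σ.P φ)
    (hY : Y ∈ σ.P ψ) (h : Nontrivial (X ⟶ Y)) : φ ≤ ψ :=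
  not_lt.1 fun hlt => by
    obtain ⟨f, hf⟩ := exists_ne (0 : X ⟶ Y)
    exact hf (σ.hom_zero hX hY hlt f)

lemma phase_lt_of_lexIndex_lt {n : ℕ} {φs : Fin (n + 1) → ℝ}
    (hgap : ∀ i j : Fin (n + 1), |φs i - φs j| < 1)
    (hinc : ∀ i j : Fin (n + 1), i < j → φs i < φs j) {q q' : ℤ × Fin (n + 1)}
    (h : lexIndex q < lexIndex q') : φs q.2 + q.1 < φs q'.2 + q'.1 := by
  rcases lexIndex_lt_iff.1 h with ht | ⟨ht, hc⟩
  · have : (q.1 : ℝ) + 1 ≤ q'.1 := by exact_mod_cast ht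
    linarith [(abs_lt.1 (hgap q.2 q'.2)).2]
  · rw [ht]
    linarith [hinc _ _ hc]

variable [Linear K T] {n : ℕ} {E : Fin (n + 1) → T}

theorem IsFullExtExceptional.exists_iso_shift_of_semistable (hE : IsFullExtExceptional K E)
    (hT : IsProper (T := T) K) (σ : Stab T) {φs : Fin (n + 1) → ℝ}
    (hss : ∀ i, σ.hasPhase (E i) (φs i)) (hgap : ∀ i j : Fin (n + 1), |φs i - φs j| < 1)
    (hinc : ∀ i j : Fin (n + 1), i < j → φs i < φs j) {X : T} (hX : IsExcT K X)
    (hXs : σ.semistable X) : ∃ (i : Fin (n + 1)) (j : ℤ), Nonempty (X ≅ (E i)⟦j⟧) := by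
  obtain ⟨hX₀, φ, hφ⟩ := hXs
  obtain ⟨qm, hqm, L, hL, hsorted⟩ := hE.exists_tower hT hX₀
  have hmem (q : ℤ × Fin (n + 1)) : shifts E q ∈ σ.P (φs q.2 + q.1) :=
    σ.mem_shift (hss q.2).2 q.1
  set l := (qm :: L).getLast (List.cons_ne_nil _ _)
  have hl (q) (hq : q ∈ qm :: L) : lexIndex l ≤ lexIndex q :=
    hsorted.rel_getLast_of_rel_getLast_getLast hq le_rfl
  have hout : Nontrivial (X ⟶ shifts E l) := hL.nontrivial_hom_getLast _
    ((hE.isExc l.2).not_isZero_shift _) fun q hq =>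
      hE.subsingleton_shift_hom_of_lexIndex_le (hl q hq)
  have hlm : l = qm := lexIndex_injective <| (hl qm List.mem_cons_self).antisymm <|
    not_lt.1 fun hlt => (phase_lt_of_lexIndex_lt hgap hinc hlt).not_ge <|
      (σ.le_of_nontrivial_hom (hmem qm) hφ hqm).trans (σ.le_of_nontrivial_hom hφ (hmem l) hout)
  have hLqm (q) (hq : q ∈ L) : q = qm := lexIndex_injective <|
    ((List.pairwise_cons.1 hsorted).1 q hq).antisymm (hlm ▸ hl q (List.mem_cons_of_mem _ hq))
  obtain ⟨e⟩ := hL.nonempty_iso_of_forall_mem_eq hLqm ((hE.isExc qm.2).not_isZero_shift _)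
    ((hE.isExc qm.2).subsingleton_shift_hom_shift_one _) hX.1
  exact ⟨qm.2, qm.1, ⟨e.symm⟩⟩

end Stability

/-- Let `σ` be a (locally finite) stability condition on a proper `K`-linear pretriangulated
category `T` and `(E₀, …, Eₙ)` a full `σ`-exceptional collection with strictly increasing
phases. Then every `σ`-semistable exceptional object of `T` is isomorphic to some `(E i)⟦j⟧`;
in particular, up to shift and isomorphism there are exactly `n + 1` `σ`-semistable
exceptional objects. -/
theorem statement_2 (K : Type) [Field K]
    {T : Type u} [Category.{v} T] [Preadditive T] [HasZeroObject T] [HasShift T ℤ]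
    [∀ n : ℤ, (CategoryTheory.shiftFunctor T n).Additive] [Pretriangulated T]
    [CategoryTheory.Linear K T]
    (hproper : IsProper (T := T) K)
    (σ : Stab T) (n : ℕ) (E : Fin (n + 1) → T) (φs : Fin (n + 1) → ℝ)
    (hexc : ∀ i, IsExcT K (E i))
    (hcoll : ∀ i j : Fin (n + 1), j < i → ∀ (k : ℤ) (f : E i ⟶ (E j)⟦k⟧), f = 0)
    (hfull : ∀ X : T, GeneratedBy (Set.range E) X)
    (hss : ∀ i, σ.hasPhase (E i) (φs i))
    (hExt : ∀ i j : Fin (n + 1), i ≠ j → ∀ k : ℤ, k ≤ 0 → ∀ f : E i ⟶ (E j)⟦k⟧, f = 0)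
    (hgap : ∀ i j : Fin (n + 1), |φs i - φs j| < 1)
    (hinc : ∀ i j : Fin (n + 1), i < j → φs i < φs j) :
    (∀ X : T, IsExcT K X → σ.semistable X →
      ∃ (i : Fin (n + 1)) (j : ℤ), Nonempty (X ≅ (E i)⟦j⟧)) ∧
    (∀ i, σ.semistable (E i)) ∧
    (∀ (i i' : Fin (n + 1)) (j : ℤ), Nonempty (E i ≅ (E i')⟦j⟧) → i = i' ∧ j = 0) := by
  have hE : IsFullExtExceptional K E := ⟨hexc, hcoll, hfull, hExt⟩
  exact ⟨fun X hX hXs => hE.exists_iso_shift_of_semistable hproper σ hss hgap hinc hX hXs,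
    fun i => ⟨(hss i).1, φs i, (hss i).2⟩, fun i i' j ⟨e⟩ => hE.eq_of_iso_shift e⟩

end NC
end
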